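/- (Brin) For every element f of Thompson's group V there is a positive integer N = n(f) bounding the size of all finite orbits of f: for every x in [0,1), if the forward orbit {f^[n](x) : n ≥ 0} is finite, then it has at most N elements; equivalently, every periodic point of f has least period at most N. -/

import Mathlib

open Set

/-- A real number is a dyadic rational if it has the form `a / 2 ^ b`. -/
def IsDyadic (x : ℝ) : Prop := ∃ a : ℤ, ∃ b : ℕ, x = (a : ℝ) / 2 ^ b

/-- A bijection of `[0,1)` belongs to Thompson's group `V` iff there are two finite
dyadic partitions `0 = t 0 < ⋯ < t m = 1` and `0 = u 0 < ⋯ < u m = 1` of `[0,1)` and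
a permutation `σ` of the pieces such that `f` maps each half-open interval
`[t i, t (i+1))` of the first partition affinely and increasingly onto the half-open
interval `[u (σ i), u (σ i + 1))` of the second partition, with slope an integer
power of `2`.  (In particular every such `f` is right-continuous with finitely many
discontinuities and breakpoints, all of them and their images dyadic.) -/
def InThompsonV (f : Equiv.Perm (Ico (0:ℝ) 1)) : Prop :=
  ∃ m : ℕ, ∃ t u : Fin (m + 1) → ℝ,
    StrictMono t ∧ t 0 = 0 ∧ t (Fin.last m) = 1 ∧ (∀ i, IsDyadic (t i)) ∧
    StrictMono u ∧ u 0 = 0 ∧ u (Fin.last m) = 1 ∧ (∀ i, IsDyadic (u i)) ∧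
    ∃ σ : Equiv.Perm (Fin m), ∀ i : Fin m, ∃ k : ℤ,
      (2 : ℝ) ^ k * (t i.succ - t i.castSucc) = u (σ i).succ - u (σ i).castSucc ∧
      ∀ x : Ico (0:ℝ) 1, (x : ℝ) ∈ Ico (t i.castSucc) (t i.succ) →
        (f x : ℝ) = (2 : ℝ) ^ k * ((x : ℝ) - t i.castSucc) + u (σ i).castSucc

/-!
For some level `M`, an element `f` of `V` maps every standard dyadic interval of level
`n ≥ M` affinely, with slope `2 ^ e`, into a standard dyadic interval of level `n - e`. Consider
a periodic point whose exponents `e` have nonpositive sum over a period; starting its orbit at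
a maximum of the partial sums, all partial sums are `≤ 0`, so every iterate `f^[i]` stays in
this affine regime on the level-`M` interval `I` of the base point, with slope `2 ^ (partial
sum)`. Two such periodic points `y, y'` in the same `I`, of periods `p, q`, are both fixed by
`f^[p * q]`; either they coincide, or the exponent sum over a period vanishes and `f^[p]` is the
identity on `I`. Either way `p = q`, so there are at most as many such periods as level-`M`
intervals. Periodic points with positive exponent sum are handled in the same way by `f⁻¹`,
which again lies in `V`.
-/

open Function

namespace Function

variable {α G : Type*} {f : α → α} {x : α} {p : ℕ}

theorem Injective.mem_periodicPts_of_finite_range (hf : Injective f)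
    (hx : (range fun n : ℕ => f^[n] x).Finite) : x ∈ periodicPts f := by
  obtain ⟨m, n, heq, hne⟩ : ∃ m n, f^[m] x = f^[n] x ∧ m ≠ n := by
    by_contra! h
    exact infinite_range_of_injective h hx
  rcases lt_or_gt_of_ne hne with hlt | hlt
  · exact mk_mem_periodicPts (by lia) (iterate_cancel hf heq.symm)
  · exact mk_mem_periodicPts (by lia) (iterate_cancel hf heq)

theorem ncard_range_iterate_eq_minimalPeriod (hx : x ∈ periodicPts f) :
    (range fun n : ℕ => f^[n] x).ncard = minimalPeriod f x := by
  have hrange : (range fun n : ℕ => f^[n] x) = (f^[·] x) '' Iio (minimalPeriod f x) := by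
    refine (image_subset_range _ _).antisymm' ?_
    rintro _ ⟨n, rfl⟩
    exact ⟨n % minimalPeriod f x, Nat.mod_lt _ (minimalPeriod_pos_of_mem_periodicPts hx),
      iterate_mod_minimalPeriod_eq⟩
  rw [hrange, iterate_injOn_Iio_minimalPeriod.ncard_image, ← Finset.coe_Iio, ncard_coe_finset,
    Nat.card_Iio]

theorem IsPeriodicPt.birkhoffSum_mul [AddCommMonoid G] (hx : IsPeriodicPt f p x) (g : α → G)
    (q : ℕ) : birkhoffSum f g (p * q) x = q • birkhoffSum f g p x := by
  induction q with
  | zero => simp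
  | succ q ih => rw [Nat.mul_succ, birkhoffSum_add, ih, (hx.mul_const q).eq, succ_nsmul]

variable [AddCommGroup G] [LinearOrder G] [IsOrderedAddMonoid G] {g : α → G}

theorem IsPeriodicPt.birkhoffSum_le_birkhoffSum_mod (hx : IsPeriodicPt f p x)
    (hsum : birkhoffSum f g p x ≤ 0) (n : ℕ) :
    birkhoffSum f g n x ≤ birkhoffSum f g (n % p) x := by
  conv_lhs => rw [← Nat.div_add_mod n p, birkhoffSum_add, (hx.mul_const _).eq, hx.birkhoffSum_mul]
  exact add_le_of_nonpos_left (nsmul_nonpos hsum _)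

/-- Start the orbit at a maximum of the partial sums over one period. -/
theorem IsPeriodicPt.exists_forall_birkhoffSum_iterate_nonpos (hx : IsPeriodicPt f p x)
    (hp : 0 < p) (hsum : birkhoffSum f g p x ≤ 0) :
    ∃ j, ∀ i, birkhoffSum f g i (f^[j] x) ≤ 0 := by
  obtain ⟨j, -, hj⟩ := Finset.exists_max_image (Finset.range p) (birkhoffSum f g · x)
    ⟨0, Finset.mem_range.2 hp⟩
  refine ⟨j, fun i => ?_⟩
  calc birkhoffSum f g i (f^[j] x) = birkhoffSum f g (j + i) x - birkhoffSum f g j x := by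
        rw [birkhoffSum_add, add_sub_cancel_left]
    _ ≤ 0 := sub_nonpos.2 <| (hx.birkhoffSum_le_birkhoffSum_mod hsum _).trans <|
        hj _ (Finset.mem_range.2 (Nat.mod_lt _ hp))

end Function

namespace Equiv.Perm

variable {α G : Type*} (f : Perm α) {x : α} {n : ℕ}

theorem isPeriodicPt_symm_iff : IsPeriodicPt f.symm n x ↔ IsPeriodicPt f n x := by
  rw [IsPeriodicPt, IsPeriodicPt, iterate_eq_pow, iterate_eq_pow, ← inv_def, inv_pow, inv_def]
  exact IsFixedPt.equiv_symm_iff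

theorem minimalPeriod_symm : minimalPeriod f.symm x = minimalPeriod f x :=
  minimalPeriod_eq_minimalPeriod_iff.2 fun _ => f.isPeriodicPt_symm_iff

theorem symm_iterate_apply_of_isPeriodicPt (hx : IsPeriodicPt f n x) {l : ℕ} (hl : l ≤ n) :
    f.symm^[l] x = f^[n - l] x := by
  conv_lhs => rw [← hx.eq, ← Nat.add_sub_cancel' hl, iterate_add_apply]
  exact f.leftInverse_symm.iterate l _

theorem birkhoffSum_symm_of_isPeriodicPt [AddCommGroup G] {E E' : α → G}
    (hE : ∀ z, E' z = -E (f.symm z)) (hx : IsPeriodicPt f n x) :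
    birkhoffSum f.symm E' n x = -birkhoffSum f E n x := by
  calc birkhoffSum f.symm E' n x = ∑ l ∈ Finset.range n, -E (f^[n - 1 - l] x) := by
        refine Finset.sum_congr rfl fun l hl => ?_
        rw [Finset.mem_range] at hl
        rw [hE, ← iterate_succ_apply' f.symm, f.symm_iterate_apply_of_isPeriodicPt hx hl,
          Nat.sub_sub, Nat.add_comm]
    _ = -birkhoffSum f E n x := by
        rw [Finset.sum_neg_distrib, Finset.sum_range_reflect (fun l => E (f^[l] x))]
        rfl

end Equiv.Perm

/-- The index `a` of the standard dyadic interval `[a / 2 ^ n, (a + 1) / 2 ^ n)` containing `x`. -/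
noncomputable def dyadicIndex (n : ℤ) (x : ℝ) : ℤ := ⌊x * 2 ^ n⌋

def IsDyadicAtLevel (n : ℤ) (x : ℝ) : Prop := ∃ c : ℤ, x * 2 ^ n = c

theorem IsDyadic.exists_isDyadicAtLevel {x : ℝ} (hx : IsDyadic x) :
    ∃ b : ℕ, IsDyadicAtLevel b x := by
  obtain ⟨a, b, rfl⟩ := hx
  exact ⟨b, a, by rw [zpow_natCast]; field_simp⟩

theorem IsDyadicAtLevel.mono {m n : ℤ} {x : ℝ} (hx : IsDyadicAtLevel m x) (hmn : m ≤ n) :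
    IsDyadicAtLevel n x := by
  obtain ⟨c, hc⟩ := hx
  obtain ⟨k, rfl⟩ := Int.exists_add_of_le hmn
  exact ⟨c * 2 ^ k, by push_cast; rw [zpow_add₀ two_ne_zero, ← mul_assoc, hc, zpow_natCast]⟩

theorem exists_isDyadicAtLevel_of_finite {ι : Type*} [Finite ι] {v : ι → ℝ}
    (hv : ∀ i, IsDyadic (v i)) : ∃ B : ℤ, ∀ i, IsDyadicAtLevel B (v i) := by
  choose b hb using fun i => (hv i).exists_isDyadicAtLevel
  obtain ⟨B, hB⟩ := Finite.bddAbove_range b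
  exact ⟨B, fun i => (hb i).mono (by exact_mod_cast hB ⟨i, rfl⟩)⟩

theorem IsDyadicAtLevel.le_iff_le_of_dyadicIndex_eq {n : ℤ} {c x y : ℝ}
    (hc : IsDyadicAtLevel n c) (h : dyadicIndex n x = dyadicIndex n y) : c ≤ x ↔ c ≤ y := by
  obtain ⟨k, hk⟩ := hc
  have key : ∀ z : ℝ, c ≤ z ↔ k ≤ dyadicIndex n z := fun z => by
    rw [dyadicIndex, Int.le_floor, ← hk, mul_le_mul_iff_left₀ (by positivity)]
  rw [key, key, h]

theorem IsDyadicAtLevel.dyadicIndex_affine_eq {n k : ℤ} {c d x y : ℝ} (hc : IsDyadicAtLevel n c)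
    (hd : IsDyadicAtLevel (n - k) d) (h : dyadicIndex n x = dyadicIndex n y) :
    dyadicIndex (n - k) (2 ^ k * (x - c) + d) = dyadicIndex (n - k) (2 ^ k * (y - c) + d) := by
  obtain ⟨a, ha⟩ := hc
  obtain ⟨b, hb⟩ := hd
  have key : ∀ z : ℝ, (2 ^ k * (z - c) + d) * 2 ^ (n - k) = z * 2 ^ n - a + b := fun z => by
    rw [← ha, ← hb, zpow_sub₀ two_ne_zero]
    field_simp
  simp only [dyadicIndex, key, Int.floor_add_intCast, Int.floor_sub_intCast]
  rw [← dyadicIndex, ← dyadicIndex, h]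

theorem dyadicIndex_mem_Icc (n : ℤ) (z : Ico (0:ℝ) 1) : dyadicIndex n z ∈ Icc 0 ⌊(2 : ℝ) ^ n⌋ :=
  ⟨Int.floor_nonneg.2 (mul_nonneg z.2.1 (by positivity)),
    Int.floor_mono (mul_le_of_le_one_left (by positivity) z.2.2.le)⟩

theorem exists_ne_dyadicIndex_eq (n : ℤ) (z : Ico (0:ℝ) 1) :
    ∃ x : Ico (0:ℝ) 1, x ≠ z ∧ dyadicIndex n x = dyadicIndex n z := by
  have h2 : (0:ℝ) < 2 ^ n := by positivity
  have hz : (z:ℝ) < min (((dyadicIndex n z : ℝ) + 1) / 2 ^ n) 1 :=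
    lt_min ((lt_div_iff₀ h2).2 (Int.lt_floor_add_one _)) z.2.2
  obtain ⟨x, hzx, hx⟩ := exists_between hz
  refine ⟨⟨x, z.2.1.trans hzx.le, hx.trans_le (min_le_right _ _)⟩,
    fun h => hzx.ne' (congrArg Subtype.val h), ?_⟩
  rw [dyadicIndex, Int.floor_eq_iff]
  exact ⟨(Int.floor_le _).trans (mul_le_mul_of_nonneg_right hzx.le h2.le),
    (lt_div_iff₀ h2).1 (hx.trans_le (min_le_left _ _))⟩

/-- Every standard dyadic interval of level `n ≥ M` is mapped by `g` affinely, with slope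
`2 ^ E z` at each of its points `z`, into a standard dyadic interval of level `n - E z`. -/
def IsLocallyDyadicAffine (g : Ico (0:ℝ) 1 → Ico (0:ℝ) 1) (M : ℤ) (E : Ico (0:ℝ) 1 → ℤ) :
    Prop :=
  ∀ z x : Ico (0:ℝ) 1, ∀ n : ℤ, M ≤ n → dyadicIndex n x = dyadicIndex n z →
    dyadicIndex (n - E z) (g x) = dyadicIndex (n - E z) (g z) ∧
      (g x : ℝ) - g z = 2 ^ E z * (x - z)

namespace IsLocallyDyadicAffine

variable {g : Ico (0:ℝ) 1 → Ico (0:ℝ) 1} {M : ℤ} {E : Ico (0:ℝ) 1 → ℤ}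
  {x y : Ico (0:ℝ) 1}

theorem exponent_eq (hg : IsLocallyDyadicAffine g M E) {n : ℤ} (hn : M ≤ n)
    (h : dyadicIndex n x = dyadicIndex n y) : E x = E y := by
  rcases eq_or_ne x y with rfl | hxy
  · rfl
  have hxy' : (x:ℝ) - y ≠ 0 := sub_ne_zero.2 (Subtype.coe_ne_coe.2 hxy)
  have h1 := (hg y x n hn h).2
  have h2 := (hg x y n hn h.symm).2
  refine zpow_right_injective₀ (a := (2:ℝ)) two_pos (by norm_num) ?_
  exact mul_right_cancel₀ hxy' (by linear_combination h1 + h2)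

theorem iterate (hg : IsLocallyDyadicAffine g M E) (hy : ∀ i, birkhoffSum g E i y ≤ 0)
    (hx : dyadicIndex M x = dyadicIndex M y) (i : ℕ) :
    dyadicIndex (M - birkhoffSum g E i y) (g^[i] x) =
        dyadicIndex (M - birkhoffSum g E i y) (g^[i] y) ∧
      (g^[i] x : ℝ) - g^[i] y = 2 ^ birkhoffSum g E i y * (x - y) := by
  induction i with
  | zero => simpa using hx
  | succ i ih =>
    obtain ⟨hidx, hsub⟩ := hg _ _ _ (by linarith [hy i]) ih.1
    rw [birkhoffSum_succ, iterate_succ_apply', iterate_succ_apply', ← sub_sub]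
    refine ⟨hidx, ?_⟩
    rw [hsub, ih.2, zpow_add₀ two_ne_zero]
    ring

theorem birkhoffSum_eq (hg : IsLocallyDyadicAffine g M E) (hy : ∀ i, birkhoffSum g E i y ≤ 0)
    (hx : dyadicIndex M x = dyadicIndex M y) (i : ℕ) :
    birkhoffSum g E i x = birkhoffSum g E i y :=
  Finset.sum_congr rfl fun l _ =>
    hg.exponent_eq (by linarith [hy l]) (hg.iterate hy hx l).1

/-- If `x ≠ y`, then `g^[p * q]` fixes both points, which forces the exponent sum over a period
to vanish; then `g^[p]` is the identity on the level-`M` interval of `y`. -/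
theorem minimalPeriod_dvd (hg : IsLocallyDyadicAffine g M E) (hy : ∀ i, birkhoffSum g E i y ≤ 0)
    (hyp : y ∈ periodicPts g) (hxp : x ∈ periodicPts g)
    (hx : dyadicIndex M x = dyadicIndex M y) : minimalPeriod g x ∣ minimalPeriod g y := by
  set p := minimalPeriod g y
  set q := minimalPeriod g x
  rcases eq_or_ne x y with rfl | hxy
  · rfl
  have hxy' : (x:ℝ) - y ≠ 0 := sub_ne_zero.2 (Subtype.coe_ne_coe.2 hxy)
  have hyp' : IsPeriodicPt g p y := isPeriodicPt_minimalPeriod g y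
  have hpq := (hg.iterate hy hx (p * q)).2
  rw [(hyp'.mul_const q).eq, ((isPeriodicPt_minimalPeriod g x).const_mul p).eq] at hpq
  have hsum_pq : birkhoffSum g E (p * q) y = 0 := by
    refine (zpow_eq_one_iff_right₀ (a := (2:ℝ)) zero_le_two (by norm_num)).1 ?_
    exact (mul_left_eq_self₀.1 hpq.symm).resolve_right hxy'
  have hsum_p : birkhoffSum g E p y = 0 := by
    rw [hyp'.birkhoffSum_mul, smul_eq_zero] at hsum_pq
    exact hsum_pq.resolve_left (minimalPeriod_pos_of_mem_periodicPts hxp).ne'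
  have hp := (hg.iterate hy hx p).2
  rw [hsum_p, zpow_zero, one_mul, hyp'.eq, sub_left_inj] at hp
  exact IsPeriodicPt.minimalPeriod_dvd (Subtype.coe_injective hp)

theorem minimalPeriod_eq (hg : IsLocallyDyadicAffine g M E) (hy : ∀ i, birkhoffSum g E i y ≤ 0)
    (hyp : y ∈ periodicPts g) (hxp : x ∈ periodicPts g)
    (hx : dyadicIndex M x = dyadicIndex M y) : minimalPeriod g x = minimalPeriod g y :=
  Nat.dvd_antisymm (hg.minimalPeriod_dvd hy hyp hxp hx) <|
    hg.minimalPeriod_dvd (fun i => (hg.birkhoffSum_eq hy hx i).trans_le (hy i)) hxp hyp hx.symm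

/-- There are finitely many level-`M` intervals, and each one carries at most one period. -/
theorem bddAbove_minimalPeriod (hg : IsLocallyDyadicAffine g M E) :
    BddAbove (minimalPeriod g '' {y | y ∈ periodicPts g ∧ ∀ i, birkhoffSum g E i y ≤ 0}) := by
  refine Set.Finite.bddAbove <| ((finite_Icc 0 ⌊(2:ℝ) ^ M⌋).biUnion fun a _ =>
    (?_ : (minimalPeriod g '' {y | (y ∈ periodicPts g ∧ ∀ i, birkhoffSum g E i y ≤ 0) ∧
      dyadicIndex M y = a}).Subsingleton).finite).subset ?_
  · rintro _ ⟨y, ⟨⟨hyp, hy⟩, rfl⟩, rfl⟩ _ ⟨x, ⟨⟨hxp, -⟩, hx⟩, rfl⟩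
    exact (hg.minimalPeriod_eq hy hyp hxp hx).symm
  · rintro _ ⟨y, hy, rfl⟩
    exact mem_biUnion (dyadicIndex_mem_Icc M y) ⟨y, ⟨hy, rfl⟩, rfl⟩

theorem exists_minimalPeriod_le (hg : IsLocallyDyadicAffine g M E) :
    ∃ N, ∀ x ∈ periodicPts g,
      birkhoffSum g E (minimalPeriod g x) x ≤ 0 → minimalPeriod g x ≤ N := by
  obtain ⟨N, hN⟩ := hg.bddAbove_minimalPeriod
  refine ⟨N, fun x hx hsum => ?_⟩
  obtain ⟨j, hj⟩ := (isPeriodicPt_minimalPeriod g x).exists_forall_birkhoffSum_iterate_nonpos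
    (minimalPeriod_pos_of_mem_periodicPts hx) hsum
  rw [← minimalPeriod_apply_iterate hx j]
  exact hN ⟨_, ⟨mk_mem_periodicPts (minimalPeriod_pos_of_mem_periodicPts hx)
    ((isPeriodicPt_minimalPeriod g x).apply_iterate j), hj⟩, rfl⟩

theorem exponent_symm {f : Equiv.Perm (Ico (0:ℝ) 1)} {M' : ℤ} {E' : Ico (0:ℝ) 1 → ℤ}
    (hf : IsLocallyDyadicAffine f M E) (hf' : IsLocallyDyadicAffine f.symm M' E')
    (z : Ico (0:ℝ) 1) : E' z = -E (f.symm z) := by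
  set n := max M' (M + E' z)
  obtain ⟨x, hxz, hx⟩ := exists_ne_dyadicIndex_eq n z
  obtain ⟨hidx, hsub⟩ := hf' z x n (le_max_left _ _) hx
  have hsub' := (hf _ _ _ (by linarith [le_max_right M' (M + E' z)]) hidx).2
  simp only [Equiv.apply_symm_apply, hsub, ← mul_assoc, ← zpow_add₀ (two_ne_zero : (2:ℝ) ≠ 0)]
    at hsub'
  have hxz' : (x:ℝ) - z ≠ 0 := sub_ne_zero.2 (Subtype.coe_ne_coe.2 hxz)
  have := (zpow_eq_one_iff_right₀ (a := (2:ℝ)) zero_le_two (by norm_num)).1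
    ((mul_left_eq_self₀.1 hsub'.symm).resolve_right hxz')
  linarith

end IsLocallyDyadicAffine

theorem Fin.exists_mem_Ico_castSucc_succ {α : Type*} [LinearOrder α] {m : ℕ}
    (t : Fin (m + 1) → α) {x : α} (h0 : t 0 ≤ x) (h1 : x < t (Fin.last m)) :
    ∃ i : Fin m, x ∈ Ico (t i.castSucc) (t i.succ) := by
  classical
  let S := Finset.univ.filter fun j => t j ≤ x
  have hS : ∀ j, j ∈ S ↔ t j ≤ x := by simp [S]
  have hne : S.Nonempty := ⟨0, (hS 0).2 h0⟩
  let j := S.max' hne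
  have hj : t j ≤ x := (hS j).1 (S.max'_mem hne)
  have hjl : j ≠ Fin.last m := by rintro h; rw [h] at hj; exact h1.not_ge hj
  refine ⟨j.castPred hjl, by simpa using hj, lt_of_not_ge fun h => ?_⟩
  have := S.le_max' _ ((hS _).2 h)
  exact (Fin.castSucc_lt_succ (i := j.castPred hjl)).not_ge (by rwa [Fin.castSucc_castPred])

namespace InThompsonV

variable {f : Equiv.Perm (Ico (0:ℝ) 1)}

theorem symm (hf : InThompsonV f) : InThompsonV f.symm := by
  obtain ⟨m, t, u, ht, ht0, ht1, htd, hu, hu0, hu1, hud, σ, hσ⟩ := hf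
  refine ⟨m, u, t, hu, hu0, hu1, hud, ht, ht0, ht1, htd, σ.symm, fun j => ?_⟩
  obtain ⟨k, hk, hfk⟩ := hσ (σ.symm j)
  rw [Equiv.apply_symm_apply] at hk hfk
  set i := σ.symm j
  have hk' : t i.succ - t i.castSucc = 2 ^ (-k) * (u j.succ - u j.castSucc) := by
    rw [← hk, ← mul_assoc, ← zpow_add₀ two_ne_zero, neg_add_cancel, zpow_zero, one_mul]
  refine ⟨-k, hk'.symm, fun y hy => ?_⟩
  have hpos : (0:ℝ) < 2 ^ (-k) := by positivity
  have hx : 2 ^ (-k) * ((y:ℝ) - u j.castSucc) + t i.castSucc ∈ Ico (t i.castSucc) (t i.succ) :=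
    ⟨by nlinarith [hy.1], by nlinarith [hy.2]⟩
  have hx01 : 2 ^ (-k) * ((y:ℝ) - u j.castSucc) + t i.castSucc ∈ Ico (0:ℝ) 1 :=
    ⟨ht0.symm.le.trans ((ht.monotone (Fin.zero_le _)).trans hx.1),
      hx.2.trans_le ((ht.monotone (Fin.le_last _)).trans ht1.le)⟩
  have hfx : f ⟨_, hx01⟩ = y := by
    refine Subtype.ext ?_
    rw [hfk _ hx, add_sub_cancel_right, ← mul_assoc, ← zpow_add₀ two_ne_zero, add_neg_cancel,
      zpow_zero, one_mul, sub_add_cancel]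
  exact congrArg Subtype.val (f.symm_apply_eq.2 hfx.symm)

theorem exists_isLocallyDyadicAffine (hf : InThompsonV f) :
    ∃ M E, IsLocallyDyadicAffine f M E := by
  obtain ⟨m, t, u, -, ht0, ht1, htd, -, -, -, hud, σ, hσ⟩ := hf
  choose k _ hfk using hσ
  obtain ⟨Bt, hBt⟩ := exists_isDyadicAtLevel_of_finite htd
  obtain ⟨Bu, hBu⟩ := exists_isDyadicAtLevel_of_finite hud
  obtain ⟨K, hK⟩ := Finite.bddAbove_range k
  suffices ∀ z : Ico (0:ℝ) 1, ∃ e : ℤ, ∀ (x : Ico (0:ℝ) 1) n, max Bt (Bu + K) ≤ n →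
      dyadicIndex n x = dyadicIndex n z →
        dyadicIndex (n - e) (f x) = dyadicIndex (n - e) (f z) ∧
          (f x : ℝ) - f z = 2 ^ e * (x - z) by
    choose E hE using this
    exact ⟨_, E, fun z => hE z⟩
  intro z
  obtain ⟨i, hi⟩ :=
    Fin.exists_mem_Ico_castSucc_succ t (x := z) (ht0.le.trans z.2.1) (z.2.2.trans_le ht1.ge)
  refine ⟨k i, fun x n hn hxz => ?_⟩
  have hKi : k i ≤ K := hK ⟨i, rfl⟩
  have htn : ∀ j, IsDyadicAtLevel n (t j) := fun j => (hBt j).mono (le_of_max_le_left hn)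
  have hun : IsDyadicAtLevel (n - k i) (u (σ i).castSucc) :=
    (hBu _).mono (by linarith [le_of_max_le_right hn])
  have hcross := fun j => (htn j).le_iff_le_of_dyadicIndex_eq hxz
  have hx : (x:ℝ) ∈ Ico (t i.castSucc) (t i.succ) :=
    ⟨(hcross _).2 hi.1, not_le.1 ((hcross _).not.2 (not_le.2 hi.2))⟩
  rw [hfk i x hx, hfk i z hi]
  exact ⟨(htn _).dyadicIndex_affine_eq hun hxz, by ring⟩

theorem exists_minimalPeriod_le (hf : InThompsonV f) :
    ∃ N, ∀ x ∈ periodicPts f, minimalPeriod f x ≤ N := by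
  obtain ⟨M, E, hE⟩ := hf.exists_isLocallyDyadicAffine
  obtain ⟨M', E', hE'⟩ := hf.symm.exists_isLocallyDyadicAffine
  obtain ⟨N, hN⟩ := hE.exists_minimalPeriod_le
  obtain ⟨N', hN'⟩ := hE'.exists_minimalPeriod_le
  refine ⟨max N N', fun x hx => ?_⟩
  rcases le_total (birkhoffSum f E (minimalPeriod f x) x) 0 with hsum | hsum
  · exact le_max_of_le_left (hN x hx hsum)
  · have hx' : x ∈ periodicPts f.symm := mk_mem_periodicPts
      (minimalPeriod_pos_of_mem_periodicPts hx)
      (f.isPeriodicPt_symm_iff.2 (isPeriodicPt_minimalPeriod f x))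
    have hsum' : birkhoffSum f.symm E' (minimalPeriod f.symm x) x ≤ 0 := by
      rw [f.minimalPeriod_symm, f.birkhoffSum_symm_of_isPeriodicPt (hE.exponent_symm hE')
        (isPeriodicPt_minimalPeriod f x)]
      exact neg_nonpos.2 hsum
    exact le_max_of_le_right (f.minimalPeriod_symm ▸ hN' x hx' hsum')

end InThompsonV

/-- (Brin) For every element `f` of Thompson's group `V` there is a positive integer
`N = n(f)` bounding the size of all finite orbits of `f`: for every `x ∈ [0,1)`, if
the forward orbit `{f^[n] x : n ≥ 0}` is finite then it has at most `N` elements;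
equivalently, every periodic point of `f` has least period at most `N`. -/
theorem thompsonV_finite_orbits_bounded :
    ∀ f : Equiv.Perm (Ico (0:ℝ) 1), InThompsonV f →
      ∃ N : ℕ, 0 < N ∧
        (∀ x : Ico (0:ℝ) 1, (Set.range fun n : ℕ => (⇑f)^[n] x).Finite →
          (Set.range fun n : ℕ => (⇑f)^[n] x).ncard ≤ N) ∧
        (∀ x : Ico (0:ℝ) 1, ∀ m : ℕ, 0 < m → (⇑f)^[m] x = x →
          (∀ k : ℕ, 0 < k → k < m → (⇑f)^[k] x ≠ x) → m ≤ N) := by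
  intro f hf
  obtain ⟨N, hN⟩ := hf.exists_minimalPeriod_le
  refine ⟨N + 1, N.succ_pos, fun x hfin => ?_, fun x m hm hfix hmin => ?_⟩
  · have hx := f.injective.mem_periodicPts_of_finite_range hfin
    rw [ncard_range_iterate_eq_minimalPeriod hx]
    exact (hN x hx).trans N.le_succ
  · have hx : x ∈ periodicPts f := mk_mem_periodicPts hm hfix
    have hmx : m ≤ minimalPeriod f x := le_of_not_gt fun hlt =>
      hmin _ (minimalPeriod_pos_of_mem_periodicPts hx) hlt iterate_minimalPeriod
    exact hmx.trans ((hN x hx).trans N.le_succ)
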